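/- Fix R > 0, c > 0, γ ∈ ℝ, and α0, β0 > 0, and consider the private-sampling game defined in the context. The profile with q0 = 1, q1 = 0, and σ_D(p) = 1 if p < 1/2 and σ_D(p) = 0 if p > 1/2 (with σ_D(1/2) arbitrary) is never a pure-strategy equilibrium: for every choice of the parameters at least one of the two attacker best-response conditions fails. -/

import Mathlib

open intervalIntegral

/-- The Beta function `B(a,b) = ∫_0^1 t^(a−1)(1−t)^(b−1) dt`. -/
noncomputable def betaFn (a b : ℝ) : ℝ :=
  ∫ t in (0:ℝ)..1, t ^ (a - 1) * (1 - t) ^ (b - 1)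

/-- The regularized incomplete Beta function
`I_x(a,b) = (∫_0^x t^(a−1)(1−t)^(b−1) dt) / B(a,b)`. -/
noncomputable def regIncBeta (x a b : ℝ) : ℝ :=
  (∫ t in (0:ℝ)..x, t ^ (a - 1) * (1 - t) ^ (b - 1)) / betaFn a b

/-- The attacker's posterior mean `m(θ) = (α0+θ)/(α0+β0+1)`. -/
noncomputable def postMean (α0 β0 θ : ℝ) : ℝ := (α0 + θ) / (α0 + β0 + 1)

/-- The attacker's conditional expectation of the defender's strategy,
`E_D(θ) = (∫_0^1 σ_D(p)·p^(α0+θ−1)(1−p)^(β0−θ) dp) / B(α0+θ, β0+1−θ)`. -/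
noncomputable def expDef (α0 β0 θ : ℝ) (σD : ℝ → ℝ) : ℝ :=
  (∫ p in (0:ℝ)..1, σD p * (p ^ (α0 + θ - 1) * (1 - p) ^ (β0 - θ)))
    / betaFn (α0 + θ) (β0 + 1 - θ)

/-- The attacker's (reduced) objective given sample `θ`:
`σ ↦ σ·((m(θ) − γ)R + c·(1 − 2E_D(θ)))`. -/
noncomputable def attackerObj (R c γ α0 β0 θ : ℝ) (σD : ℝ → ℝ) (σ : ℝ) : ℝ :=
  σ * ((postMean α0 β0 θ - γ) * R + c * (1 - 2 * expDef α0 β0 θ σD))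

/-- `(q0, q1, σ_D)` is a pure-strategy equilibrium of the private-sampling game:
all strategies are probabilities, `q_θ` maximizes the attacker's objective for each
sample `θ ∈ {0,1}`, and for every `p ∈ [0,1]` with `p ≠ 1/2`, `σ_D(p)` minimizes
the defender's objective `σ ↦ σ·(1 − 2((1−p)q0 + p·q1))`. -/
def IsPureEq (R c γ α0 β0 : ℝ) (q0 q1 : ℝ) (σD : ℝ → ℝ) : Prop :=
  q0 ∈ Set.Icc (0:ℝ) 1 ∧ q1 ∈ Set.Icc (0:ℝ) 1
    ∧ (∀ p ∈ Set.Icc (0:ℝ) 1, σD p ∈ Set.Icc (0:ℝ) 1)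
    ∧ (∀ σ ∈ Set.Icc (0:ℝ) 1,
        attackerObj R c γ α0 β0 0 σD σ ≤ attackerObj R c γ α0 β0 0 σD q0)
    ∧ (∀ σ ∈ Set.Icc (0:ℝ) 1,
        attackerObj R c γ α0 β0 1 σD σ ≤ attackerObj R c γ α0 β0 1 σD q1)
    ∧ (∀ p ∈ Set.Icc (0:ℝ) 1, p ≠ 1/2 → ∀ σ ∈ Set.Icc (0:ℝ) 1,
        σD p * (1 - 2 * ((1 - p) * q0 + p * q1))
          ≤ σ * (1 - 2 * ((1 - p) * q0 + p * q1)))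

/-!
Optimality of `q0 = 1` against `σ = 0` makes the attacker's payoff slope after sample `0`
nonnegative, and optimality of `q1 = 0` against `σ = 1` makes the slope after sample `1`
nonpositive. Yet the second slope is strictly larger. The posterior mean rises by
`1 / (α0 + β0 + 1)`, while against the threshold defender
`E_D(θ) = I_{1/2}(α0 + θ, β0 + 1 - θ)` does not increase from `θ = 0` to `θ = 1`:
the kernel of `B(α0 + 1, β0)` is that of `B(α0, β0 + 1)` reweighted by the likelihood ratio
`x / (1 - x)`, which is `≤ 1` left of `1/2` and `≥ 1` right of it, so it moves mass away
from `[0, 1/2]`.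
-/

open MeasureTheory Set intervalIntegral

lemma intervalIntegrable_rpow_mul_one_sub_rpow_zero_half {u : ℝ} (hu : -1 < u) (v : ℝ) :
    IntervalIntegrable (fun t : ℝ => t ^ u * (1 - t) ^ v) volume 0 (1 / 2) := by
  refine (intervalIntegrable_rpow' hu).mul_continuousOn
    (ContinuousOn.rpow_const (by fun_prop) fun t ht => Or.inl ?_)
  rw [uIcc_of_le (by norm_num)] at ht
  linarith [ht.2]

lemma intervalIntegrable_rpow_mul_one_sub_rpow {u v : ℝ} (hu : -1 < u) (hv : -1 < v) :
    IntervalIntegrable (fun t : ℝ => t ^ u * (1 - t) ^ v) volume 0 1 := by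
  refine (intervalIntegrable_rpow_mul_one_sub_rpow_zero_half hu v).trans ?_
  convert ((intervalIntegrable_rpow_mul_one_sub_rpow_zero_half hv u).comp_sub_left 1).symm
    using 1
  · ext t
    simp only [sub_sub_cancel, mul_comm]
  · norm_num
  · norm_num

lemma betaFn_pos {a b : ℝ} (ha : 0 < a) (hb : 0 < b) : 0 < betaFn a b :=
  intervalIntegral_pos_of_pos_on
    (intervalIntegrable_rpow_mul_one_sub_rpow (by linarith) (by linarith))
    (fun t ht => mul_pos (Real.rpow_pos_of_pos ht.1 _)
      (Real.rpow_pos_of_pos (by linarith [ht.2]) _))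
    one_pos

lemma integral_mul_eq_integral_of_threshold {σ f : ℝ → ℝ} {a b c : ℝ} (hb : b ∈ Icc a c)
    (hlt : ∀ p < b, σ p = 1) (hgt : ∀ p, b < p → σ p = 0) :
    ∫ p in a..c, σ p * f p = ∫ p in a..b, f p := by
  rw [← integral_indicator hb]
  refine integral_congr_ae ?_
  filter_upwards [Measure.ae_ne volume b] with p hp _
  rcases hp.lt_or_gt with hp | hp
  · simp [hlt p hp, hp.le]
  · simp [hgt p hp, hp.not_ge]

lemma expDef_eq_regIncBeta {α0 β0 θ x : ℝ} {σD : ℝ → ℝ} (hx : x ∈ Icc (0 : ℝ) 1)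
    (hlt : ∀ p < x, σD p = 1) (hgt : ∀ p, x < p → σD p = 0) :
    expDef α0 β0 θ σD = regIncBeta x (α0 + θ) (β0 + 1 - θ) := by
  rw [expDef, regIncBeta, integral_mul_eq_integral_of_threshold hx hlt hgt]
  ring_nf

lemma div_add_le_div_add {A C A' C' : ℝ} (hA : 0 ≤ A) (hC : 0 ≤ C) (hAA' : A' ≤ A)
    (hCC' : C ≤ C') (hpos : 0 < A + C) (hpos' : 0 < A' + C') :
    A' / (A' + C') ≤ A / (A + C) := by
  rw [div_le_div_iff₀ hpos' hpos]
  nlinarith [mul_le_mul_of_nonneg_right hAA' hC, mul_le_mul_of_nonneg_left hCC' hA]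

lemma integral_div_integral_le_of_crossing {f g : ℝ → ℝ} {a b c : ℝ}
    (hab : a ≤ b) (hbc : b ≤ c)
    (hf : IntervalIntegrable f volume a c) (hg : IntervalIntegrable g volume a c)
    (hf_nonneg : ∀ x ∈ Icc a c, 0 ≤ f x)
    (hleft : ∀ x ∈ Ioo a b, g x ≤ f x) (hright : ∀ x ∈ Ioo b c, f x ≤ g x)
    (hf_pos : 0 < ∫ x in a..c, f x) (hg_pos : 0 < ∫ x in a..c, g x) :
    (∫ x in a..b, g x) / (∫ x in a..c, g x) ≤
      (∫ x in a..b, f x) / (∫ x in a..c, f x) := by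
  have hb : b ∈ uIcc a c := mem_uIcc_of_le hab hbc
  have hsub_left : uIcc a b ⊆ uIcc a c := uIcc_subset_uIcc left_mem_uIcc hb
  have hsub_right : uIcc b c ⊆ uIcc a c := uIcc_subset_uIcc hb right_mem_uIcc
  rw [← integral_add_adjacent_intervals (hf.mono_set hsub_left) (hf.mono_set hsub_right),
    ← integral_add_adjacent_intervals (hg.mono_set hsub_left) (hg.mono_set hsub_right)] at *
  refine div_add_le_div_add ?_ ?_ ?_ ?_ hf_pos hg_pos
  · exact integral_nonneg hab fun x hx => hf_nonneg x ⟨hx.1, hx.2.trans hbc⟩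
  · exact integral_nonneg hbc fun x hx => hf_nonneg x ⟨hab.trans hx.1, hx.2⟩
  · exact integral_mono_on_of_le_Ioo hab (hg.mono_set hsub_left) (hf.mono_set hsub_left) hleft
  · exact integral_mono_on_of_le_Ioo hbc (hf.mono_set hsub_right) (hg.mono_set hsub_right)
      hright

lemma rpow_mul_one_sub_rpow_sub_one_eq {a b x : ℝ} (hx : x ∈ Ioo (0 : ℝ) 1) :
    x ^ a * (1 - x) ^ (b - 1) = x / (1 - x) * (x ^ (a - 1) * (1 - x) ^ b) := by
  have hx0 : x ≠ 0 := hx.1.ne'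
  have h1x : 1 - x ≠ 0 := by linarith [hx.2]
  rw [Real.rpow_sub_one hx0, Real.rpow_sub_one h1x]
  field_simp

lemma regIncBeta_half_add_one_left_le {a b : ℝ} (ha : 0 < a) (hb : 0 < b) :
    regIncBeta (1 / 2) (a + 1) b ≤ regIncBeta (1 / 2) a (b + 1) := by
  have hf_pos := betaFn_pos ha (add_pos hb one_pos)
  have hg_pos := betaFn_pos (add_pos ha one_pos) hb
  simp only [regIncBeta, betaFn, add_sub_cancel_right] at *
  refine integral_div_integral_le_of_crossing (by norm_num) (by norm_num)
    (intervalIntegrable_rpow_mul_one_sub_rpow (by linarith) (by linarith))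
    (intervalIntegrable_rpow_mul_one_sub_rpow (by linarith) (by linarith))
    (fun x hx => mul_nonneg (Real.rpow_nonneg hx.1 _) (Real.rpow_nonneg (by linarith [hx.2]) _))
    (fun x hx => ?_) (fun x hx => ?_) hf_pos hg_pos
  all_goals
    have hx01 : x ∈ Ioo (0 : ℝ) 1 := ⟨by linarith [hx.1], by linarith [hx.2]⟩
    have hw : 0 ≤ x ^ (a - 1) * (1 - x) ^ b :=
      mul_nonneg (Real.rpow_nonneg hx01.1.le _) (Real.rpow_nonneg (by linarith [hx01.2]) _)
    have h1x : 0 < 1 - x := by linarith [hx01.2]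
    rw [rpow_mul_one_sub_rpow_sub_one_eq hx01]
  · exact mul_le_of_le_one_left hw ((div_le_one h1x).2 (by linarith [hx.2]))
  · exact le_mul_of_one_le_left hw ((one_le_div h1x).2 (by linarith [hx.1]))

lemma postMean_zero_lt_one {α0 β0 : ℝ} (h : 0 < α0 + β0 + 1) :
    postMean α0 β0 0 < postMean α0 β0 1 := by
  unfold postMean
  gcongr
  norm_num

theorem case_one_three_never_equilibrium_general (R c γ α0 β0 : ℝ)
    (hR : 0 < R) (hc : 0 < c) (hα : 0 < α0) (hβ : 0 < β0)
    (σD : ℝ → ℝ)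
    (hσD_lt : ∀ p : ℝ, p < 1/2 → σD p = 1)
    (hσD_gt : ∀ p : ℝ, 1/2 < p → σD p = 0) :
    ¬ IsPureEq R c γ α0 β0 1 0 σD := by
  rintro ⟨-, -, -, hbest0, hbest1, -⟩
  have hE : expDef α0 β0 1 σD ≤ expDef α0 β0 0 σD := by
    have hhalf : (1 / 2 : ℝ) ∈ Icc (0 : ℝ) 1 := ⟨by norm_num, by norm_num⟩
    rw [expDef_eq_regIncBeta hhalf hσD_lt hσD_gt, expDef_eq_regIncBeta hhalf hσD_lt hσD_gt,
      add_sub_cancel_right, add_zero, sub_zero]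
    exact regIncBeta_half_add_one_left_le hα hβ
  have hm := postMean_zero_lt_one (α0 := α0) (β0 := β0) (by linarith)
  have hslope0 := hbest0 0 ⟨le_rfl, zero_le_one⟩
  have hslope1 := hbest1 1 ⟨zero_le_one, le_rfl⟩
  simp only [attackerObj, zero_mul, one_mul] at hslope0 hslope1
  linarith [mul_le_mul_of_nonneg_left hE hc.le, mul_lt_mul_of_pos_right hm hR]

/-- case (1.iii) of the proof of Lemma 2: the attacker playing
opposite to its sample (`q0 = 1`, `q1 = 0`) with the defender defending `a`
exactly when `p < 1/2` (`σ_D(1/2)` arbitrary in `[0,1]`) is never a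
pure-strategy equilibrium. -/
theorem case_one_three_never_equilibrium (R c γ α0 β0 : ℝ)
    (hR : 0 < R) (hc : 0 < c) (hα : 0 < α0) (hβ : 0 < β0)
    (σD : ℝ → ℝ)
    (hσD_lt : ∀ p : ℝ, p < 1/2 → σD p = 1)
    (hσD_gt : ∀ p : ℝ, 1/2 < p → σD p = 0)
    (hσD_half : σD (1/2) ∈ Set.Icc (0:ℝ) 1) :
    ¬ IsPureEq R c γ α0 β0 1 0 σD :=
  case_one_three_never_equilibrium_general R c γ α0 β0 hR hc hα hβ σD hσD_lt hσD_gt
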